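/- Let q be an odd prime power and let χ be a character of F_q^× with χ² ≠ 1. Fix α ∈ F_q^× such that the matrix [[1,α],[1,1]] has order q+1 in PGL₂(F_q). In the principal series representation π = Ps(χ, χ⁻¹) of PGL₂(F_q), with the explicit unit invariant vectors v_H and v_K for the split torus H and the nonsplit torus K generated by [[1,α],[1,1]], one has ⟨v_H, v_K⟩_π = (1/(|H||K|)) Σ_{λ∈F_q^×} χ(αλ⁻¹ − λ). -/

import Mathlib

/-!
Since `f` and the `f_λ` are supported on pairwise disjoint Borel cosets, and `f_λ` has modulus
one on its coset, of cardinality `q(q-1)²`, we get `⟨f_λ, f⟩ = 0` and `⟨f_λ, f_μ⟩ = δ_{λμ}`.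
Expanding `v_H` and `v_K` in the Bruhat basis, only the `f_λ` with `λ ≠ 0` contribute, each with
coefficient `χ⁻¹(λ) · conj χ(1/(α-λ²)) = χ((α-λ²)/λ)`.
-/

open Matrix

noncomputable section

variable (F : Type) [Field F] [Fintype F] [DecidableEq F]

/-- The Bruhat basis vector `f` of the principal series `Ps(χ, χ⁻¹)` of `PGL₂(F_q)` in
the induced model (`f(bg) = χ(b₀₀/b₁₁) f(g)` for upper triangular `b`), supported on the
Borel subgroup and normalized by `f(1) = 1`. -/
def brF (χ : MulChar F ℂ) (g : GL (Fin 2) F) : ℂ :=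
  if (g : Matrix (Fin 2) (Fin 2) F) 1 0 = 0 then
    χ ((g : Matrix (Fin 2) (Fin 2) F) 0 0 / (g : Matrix (Fin 2) (Fin 2) F) 1 1)
  else 0

/-- The Bruhat basis vector `f_λ` of the principal series `Ps(χ, χ⁻¹)` of `PGL₂(F_q)`,
supported on the Borel coset of `w·[[1,λ],[0,1]]` (where `w = [[0,1],[1,0]]`) and
normalized by `f_λ(w·[[1,λ],[0,1]]) = 1`. -/
def brFl (χ : MulChar F ℂ) (l : F) (g : GL (Fin 2) F) : ℂ :=
  if (g : Matrix (Fin 2) (Fin 2) F) 1 0 ≠ 0 ∧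
      (g : Matrix (Fin 2) (Fin 2) F) 1 1 / (g : Matrix (Fin 2) (Fin 2) F) 1 0 = l then
    χ (-(g : Matrix (Fin 2) (Fin 2) F).det / ((g : Matrix (Fin 2) (Fin 2) F) 1 0) ^ 2)
  else 0

/-- The standard `G`-invariant inner product on the induced model of the principal
series, normalized so that the Bruhat basis `{f, f_λ}` is orthonormal (each basis vector
is supported on a single Borel coset, of cardinality `q(q-1)²`, with values of modulus
one). -/
def psInner (φ ψ' : GL (Fin 2) F → ℂ) : ℂ :=
  ((Fintype.card F * (Fintype.card F - 1) ^ 2 : ℕ) : ℂ)⁻¹ *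
    ∑ g : GL (Fin 2) F, φ g * (starRingEnd ℂ) (ψ' g)

/-- The `H`-invariant unit vector `v_H = (1/|H|) ∑_{λ≠0} χ⁻¹(λ) f_λ` for the split torus
`H`. -/
def psVH (χ : MulChar F ℂ) : GL (Fin 2) F → ℂ := fun g =>
  ((Fintype.card F - 1 : ℕ) : ℂ)⁻¹ * ∑ l : Fˣ, χ⁻¹ (l : F) * brFl F χ (l : F) g

/-- The `K`-invariant unit vector `v_K = (1/|K|)(f + ∑_λ χ(1/(α-λ²)) f_λ)` for the
non-split torus `K = ⟨[[1,α],[1,1]]⟩`. -/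
def psVK (χ : MulChar F ℂ) (α : F) : GL (Fin 2) F → ℂ := fun g =>
  ((Fintype.card F + 1 : ℕ) : ℂ)⁻¹ *
    (brF F χ g + ∑ l : F, χ ((α - l ^ 2)⁻¹) * brFl F χ l g)

lemma MulChar.conj_apply {K : Type*} [Field K] [Finite K] (χ : MulChar K ℂ) (a : K) :
    starRingEnd ℂ (χ a) = χ a⁻¹ := by
  rw [← MulChar.inv_apply', ← MulChar.star_apply']
  rfl

lemma MulChar.apply_mul_conj_apply_self {K : Type*} [Field K] [Finite K]
    (χ : MulChar K ℂ) {a : K} (ha : a ≠ 0) : χ a * starRingEnd ℂ (χ a) = 1 := by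
  rw [MulChar.conj_apply, ← map_mul, mul_inv_cancel₀ ha, map_one]

lemma MulChar.inv_apply_mul_conj_apply_inv {K : Type*} [Field K] [Finite K]
    (χ : MulChar K ℂ) {l : K} (hl : l ≠ 0) (a : K) :
    χ⁻¹ l * starRingEnd ℂ (χ (a - l ^ 2)⁻¹) = χ (a * l⁻¹ - l) := by
  rw [MulChar.conj_apply, inv_inv, MulChar.inv_apply', ← map_mul]
  congr 1
  field_simp

/-- The Borel coset `B·w·[[1,l],[0,1]]`. -/
def bruhatCell {K : Type*} [Field K] (l : K) : Set (GL (Fin 2) K) :=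
  {g | (g : Matrix (Fin 2) (Fin 2) K) 1 0 ≠ 0 ∧
    (g : Matrix (Fin 2) (Fin 2) K) 1 1 / (g : Matrix (Fin 2) (Fin 2) K) 1 0 = l}

section BruhatCell

variable {K : Type*} [Field K] {l : K}

instance [DecidableEq K] (l : K) : DecidablePred (· ∈ bruhatCell l) := fun _ => instDecidableAnd

lemma mem_bruhatCell_iff {g : GL (Fin 2) K} :
    g ∈ bruhatCell l ↔ g.val 1 0 ≠ 0 ∧ g.val 1 1 = l * g.val 1 0 :=
  and_congr_right fun h10 => div_eq_iff h10

lemma det_eq_of_mem_bruhatCell {g : GL (Fin 2) K} (hg : g ∈ bruhatCell l) :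
    g.val.det = (g.val 0 0 * l - g.val 0 1) * g.val 1 0 := by
  rw [Matrix.det_fin_two, (mem_bruhatCell_iff.1 hg).2]
  ring

def bruhatCellEquiv (l : K) : bruhatCell l ≃ K × Kˣ × Kˣ where
  toFun g :=
    (g.1.val 0 0,
      Units.mk0 (g.1.val 0 0 * l - g.1.val 0 1)
        (left_ne_zero_of_mul (det_eq_of_mem_bruhatCell g.2 ▸ g.1.det_ne_zero)),
      Units.mk0 (g.1.val 1 0) g.2.1)
  invFun x :=
    ⟨.mkOfDetNeZero !![x.1, x.1 * l - x.2.1; x.2.2, l * x.2.2] (by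
        rw [Matrix.det_fin_two_of, show x.1 * (l * x.2.2) - (x.1 * l - x.2.1) * x.2.2 =
          x.2.1 * x.2.2 by ring]
        exact mul_ne_zero x.2.1.ne_zero x.2.2.ne_zero),
      mem_bruhatCell_iff.2 ⟨x.2.2.ne_zero, rfl⟩⟩
  left_inv g := by
    obtain ⟨g, hg⟩ := g
    ext i j
    fin_cases i <;> fin_cases j <;> simp [(mem_bruhatCell_iff.1 hg).2]
  right_inv x := by
    ext <;> simp

lemma card_bruhatCell [Fintype K] [DecidableEq K] (l : K) :
    Fintype.card (bruhatCell l) = Fintype.card K * (Fintype.card K - 1) ^ 2 := by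
  rw [Fintype.card_congr (bruhatCellEquiv l), Fintype.card_prod, Fintype.card_prod,
    Fintype.card_units, sq]

end BruhatCell

section BruhatBasis

variable {K : Type} [Field K] [DecidableEq K] (χ : MulChar K ℂ)

lemma brFl_of_mem_bruhatCell {l : K} {g : GL (Fin 2) K} (hg : g ∈ bruhatCell l) :
    brFl K χ l g = χ (-g.val.det / g.val 1 0 ^ 2) :=
  if_pos hg

lemma brFl_of_notMem_bruhatCell {l : K} {g : GL (Fin 2) K} (hg : g ∉ bruhatCell l) :
    brFl K χ l g = 0 :=
  if_neg hg

lemma brF_eq_zero_of_mem_bruhatCell {l : K} {g : GL (Fin 2) K} (hg : g ∈ bruhatCell l) :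
    brF K χ g = 0 :=
  if_neg hg.1

lemma brFl_mul_conj_brF (l : K) (g : GL (Fin 2) K) :
    brFl K χ l g * starRingEnd ℂ (brF K χ g) = 0 := by
  by_cases hg : g ∈ bruhatCell l
  · rw [brF_eq_zero_of_mem_bruhatCell χ hg, map_zero, mul_zero]
  · rw [brFl_of_notMem_bruhatCell χ hg, zero_mul]

lemma brFl_mul_conj_brFl_self [Finite K] (l : K) (g : GL (Fin 2) K) :
    brFl K χ l g * starRingEnd ℂ (brFl K χ l g) = if g ∈ bruhatCell l then 1 else 0 := by
  by_cases hg : g ∈ bruhatCell l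
  · rw [if_pos hg, brFl_of_mem_bruhatCell χ hg]
    exact χ.apply_mul_conj_apply_self
      (div_ne_zero (neg_ne_zero.2 g.det_ne_zero) (pow_ne_zero 2 hg.1))
  · rw [if_neg hg, brFl_of_notMem_bruhatCell χ hg, zero_mul]

lemma brFl_mul_conj_brFl_of_ne {l m : K} (hlm : l ≠ m) (g : GL (Fin 2) K) :
    brFl K χ l g * starRingEnd ℂ (brFl K χ m g) = 0 := by
  by_cases hg : g ∈ bruhatCell l
  · have hg' : g ∉ bruhatCell m := fun hm => hlm (hg.2.symm.trans hm.2)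
    rw [brFl_of_notMem_bruhatCell χ hg', map_zero, mul_zero]
  · rw [brFl_of_notMem_bruhatCell χ hg, zero_mul]

end BruhatBasis

section PsInner

variable {K : Type} [Field K] [Fintype K] [DecidableEq K]

lemma psInner_smul_left (c : ℂ) (φ ψ : GL (Fin 2) K → ℂ) :
    psInner K (c • φ) ψ = c * psInner K φ ψ := by
  simp only [psInner, Pi.smul_apply, smul_eq_mul, mul_assoc, ← Finset.mul_sum]
  ring

lemma psInner_smul_right (c : ℂ) (φ ψ : GL (Fin 2) K → ℂ) :
    psInner K φ (c • ψ) = starRingEnd ℂ c * psInner K φ ψ := by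
  simp only [psInner, Pi.smul_apply, smul_eq_mul, map_mul, mul_left_comm _ (starRingEnd ℂ c),
    ← Finset.mul_sum]

lemma psInner_add_right (φ ψ ψ' : GL (Fin 2) K → ℂ) :
    psInner K φ (ψ + ψ') = psInner K φ ψ + psInner K φ ψ' := by
  simp only [psInner, Pi.add_apply, map_add, mul_add, Finset.sum_add_distrib]

lemma psInner_sum_left {ι : Type*} (s : Finset ι) (φ : ι → GL (Fin 2) K → ℂ)
    (ψ : GL (Fin 2) K → ℂ) : psInner K (∑ i ∈ s, φ i) ψ = ∑ i ∈ s, psInner K (φ i) ψ := by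
  simp only [psInner, Finset.sum_apply, Finset.sum_mul, ← Finset.mul_sum]
  rw [Finset.sum_comm]

lemma psInner_sum_right {ι : Type*} (s : Finset ι) (φ : GL (Fin 2) K → ℂ)
    (ψ : ι → GL (Fin 2) K → ℂ) : psInner K φ (∑ i ∈ s, ψ i) = ∑ i ∈ s, psInner K φ (ψ i) := by
  simp only [psInner, Finset.sum_apply, map_sum, Finset.mul_sum]
  exact Finset.sum_comm

variable (χ : MulChar K ℂ)

lemma psInner_brFl_brF (l : K) : psInner K (brFl K χ l) (brF K χ) = 0 := by
  simp only [psInner, brFl_mul_conj_brF, Finset.sum_const_zero, mul_zero]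

lemma psInner_brFl_brFl (l m : K) :
    psInner K (brFl K χ l) (brFl K χ m) = if l = m then 1 else 0 := by
  split_ifs with hlm
  · subst hlm
    have hq : 1 < Fintype.card K := Fintype.one_lt_card
    have hcard : Fintype.card K * (Fintype.card K - 1) ^ 2 ≠ 0 :=
      Nat.mul_ne_zero (by omega) (pow_ne_zero 2 (by omega))
    rw [psInner, Finset.sum_congr rfl fun g _ => brFl_mul_conj_brFl_self χ l g,
      Finset.sum_boole, ← Fintype.card_subtype, card_bruhatCell]
    exact inv_mul_cancel₀ (Nat.cast_ne_zero.2 hcard)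
  · simp only [psInner, brFl_mul_conj_brFl_of_ne χ hlm, Finset.sum_const_zero, mul_zero]

end PsInner

section InvariantVectors

variable {K : Type} [Field K] [Fintype K] [DecidableEq K] (χ : MulChar K ℂ)

lemma psVH_eq :
    psVH K χ = ((Fintype.card K - 1 : ℕ) : ℂ)⁻¹ • ∑ l : Kˣ, χ⁻¹ (l : K) • brFl K χ l := by
  ext g
  simp only [psVH, Pi.smul_apply, Finset.sum_apply, smul_eq_mul]

lemma psVK_eq (α : K) :
    psVK K χ α = ((Fintype.card K + 1 : ℕ) : ℂ)⁻¹ •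
      (brF K χ + ∑ l : K, χ (α - l ^ 2)⁻¹ • brFl K χ l) := by
  ext g
  simp only [psVK, Pi.smul_apply, Pi.add_apply, Finset.sum_apply, smul_eq_mul]

end InvariantVectors

theorem stmt_6 (χ : MulChar F ℂ) (α : F) :
    psInner F (psVH F χ) (psVK F χ α) =
      (((Fintype.card F - 1) * (Fintype.card F + 1) : ℕ) : ℂ)⁻¹ *
        ∑ l : Fˣ, χ (α * (l : F)⁻¹ - (l : F)) := by
  rw [psVH_eq, psVK_eq, psInner_smul_left, psInner_smul_right, psInner_sum_left]
  simp only [psInner_smul_left, psInner_add_right, psInner_sum_right, psInner_smul_right,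
    psInner_brFl_brF, psInner_brFl_brFl, mul_zero, zero_add, mul_ite, mul_one,
    Finset.sum_ite_eq, Finset.mem_univ, if_true]
  rw [map_inv₀, Complex.conj_natCast, Nat.cast_mul, mul_inv, mul_assoc]
  congr 2
  refine Finset.sum_congr rfl fun l _ => ?_
  rw [mul_comm, χ.inv_apply_mul_conj_apply_inv l.ne_zero]
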